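/- arXiv:math/0408261 — 6 statements merged into one kernel-verified Lean document; each statement's English description precedes it below -/
import Mathlib

section
/- Let o(k) = \sum_{i=0}^{\lceil k/2 \rceil} \binom{k+1}{2i} 2^{k-i}. Then o satisfies the recurrence o(k) = 4·o(k-1) − 2·o(k-2) for all k ≥ 2, with o(0) = 1 and o(1) = 3. -/
/-- o(k) = ∑_{i=0}^{⌈k/2⌉} C(k+1, 2i) · 2^{k-i} -/
noncomputable def o (k : ℕ) : ℤ :=
  ∑ i ∈ Finset.range ((k + 1) / 2 + 1), (Nat.choose (k + 1) (2 * i) : ℤ) * 2 ^ (k - i)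

open Finset

private def E (k : ℕ) : ℤ := ∑ i ∈ range (k+1), (Nat.choose (k+1) (2*i) : ℤ) * 2 ^ (k - i)
private def Od (k : ℕ) : ℤ := ∑ i ∈ range (k+1), (Nat.choose (k+1) (2*i+1) : ℤ) * 2 ^ (k - i)

lemma oE (k : ℕ) : o k = E k := by
  unfold o E
  apply Finset.sum_subset
  · intro i hi
    simp only [mem_range] at hi ⊢
    omega
  · intro i hi hni
    simp only [mem_range] at hi hni
    have h : k + 1 < 2 * i := by omega
    simp [Nat.choose_eq_zero_of_lt h]

lemma twoE (k : ℕ) : 2 * (∑ i ∈ range (k+1), (Nat.choose (k+1) (2*i) : ℤ) * 2 ^ (k - i))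
    = (∑ i ∈ range k, (Nat.choose (k+1) (2*i+2) : ℤ) * 2 ^ (k - i)) + 2 ^ (k+1) := by
  rw [Finset.mul_sum, Finset.sum_range_succ']
  congr 1
  · apply Finset.sum_congr rfl
    intro i hi
    simp only [mem_range] at hi
    have h1 : 2 * (i+1) = 2*i+2 := by ring
    have h3 : (2:ℤ) * 2 ^ (k - (i+1)) = 2 ^ (k - i) := by
      rw [← pow_succ']
      congr 1
      omega
    rw [h1]
    rw [← h3]
    ring
  · simp [pow_succ]; ring

lemma E_succ (k : ℕ) : E (k+1) = 2 * E k + Od k := by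
  unfold E Od
  rw [Finset.sum_range_succ']
  have step : ∀ i ∈ range (k+1),
      (Nat.choose (k+2) (2*(i+1)) : ℤ) * 2 ^ (k+1 - (i+1))
      = (Nat.choose (k+1) (2*i+1) : ℤ) * 2 ^ (k - i)
        + (Nat.choose (k+1) (2*i+2) : ℤ) * 2 ^ (k - i) := by
    intro i hi
    have h1 : 2*(i+1) = (2*i+1) + 1 := by ring
    rw [h1, Nat.choose_succ_succ]
    have h2 : k + 1 - (i+1) = k - i := by omega
    rw [h2]
    push_cast
    ring
  rw [Finset.sum_congr rfl step, Finset.sum_add_distrib]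
  rw [twoE k]
  have hsum : (∑ i ∈ range (k+1), (Nat.choose (k+1) (2*i+2) : ℤ) * 2 ^ (k - i))
      = ∑ i ∈ range k, (Nat.choose (k+1) (2*i+2) : ℤ) * 2 ^ (k - i) := by
    rw [Finset.sum_range_succ]
    have hz : (Nat.choose (k+1) (2*k+2) : ℤ) = 0 := by
      have : k + 1 < 2*k+2 := by omega
      simp [Nat.choose_eq_zero_of_lt this]
    rw [hz]
    ring
  rw [hsum]
  simp only [Nat.choose_zero_right, Nat.cast_one, one_mul, Nat.sub_zero, mul_zero]
  ring

lemma Od_succ (k : ℕ) : Od (k+1) = 2 * E k + 2 * Od k := by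
  unfold E Od
  have step : ∀ i ∈ range (k+2),
      (Nat.choose (k+2) (2*i+1) : ℤ) * 2 ^ (k+1 - i)
      = (Nat.choose (k+1) (2*i) : ℤ) * 2 ^ (k+1-i)
        + (Nat.choose (k+1) (2*i+1) : ℤ) * 2 ^ (k+1-i) := by
    intro i hi
    rw [Nat.choose_succ_succ]
    push_cast
    ring
  rw [Finset.sum_congr rfl step, Finset.sum_add_distrib]
  rw [Finset.sum_range_succ, Finset.sum_range_succ (fun i => (Nat.choose (k+1) (2*i+1) : ℤ) * 2 ^ (k+1-i))]
  have hz1 : (Nat.choose (k+1) (2*(k+1)) : ℤ) = 0 := by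
    have : k + 1 < 2*(k+1) := by omega
    simp [Nat.choose_eq_zero_of_lt this]
  have hz2 : (Nat.choose (k+1) (2*(k+1)+1) : ℤ) = 0 := by
    have : k + 1 < 2*(k+1)+1 := by omega
    simp [Nat.choose_eq_zero_of_lt this]
  rw [hz1, hz2]
  have h1 : ∀ i ∈ range (k+1), (Nat.choose (k+1) (2*i) : ℤ) * 2 ^ (k+1-i)
      = 2 * ((Nat.choose (k+1) (2*i) : ℤ) * 2 ^ (k-i)) := by
    intro i hi
    simp only [mem_range] at hi
    have : k + 1 - i = (k - i) + 1 := by omega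
    rw [this, pow_succ]
    ring
  have h2 : ∀ i ∈ range (k+1), (Nat.choose (k+1) (2*i+1) : ℤ) * 2 ^ (k+1-i)
      = 2 * ((Nat.choose (k+1) (2*i+1) : ℤ) * 2 ^ (k-i)) := by
    intro i hi
    simp only [mem_range] at hi
    have : k + 1 - i = (k - i) + 1 := by omega
    rw [this, pow_succ]
    ring
  rw [Finset.sum_congr rfl h1, Finset.sum_congr rfl h2, ← Finset.mul_sum, ← Finset.mul_sum]
  ring

theorem o_recurrence :
    (∀ k : ℕ, 2 ≤ k → o k = 4 * o (k - 1) - 2 * o (k - 2)) ∧ o 0 = 1 ∧ o 1 = 3 := by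
  refine ⟨?_, ?_, ?_⟩
  · intro k hk
    obtain ⟨m, rfl⟩ : ∃ m, k = m + 2 := ⟨k - 2, by omega⟩
    simp only [Nat.add_sub_cancel, show m + 2 - 1 = m + 1 from rfl]
    rw [oE, oE, oE, E_succ (m+1), E_succ m, Od_succ m]
    ring
  · simp [o]
  · show (∑ i ∈ Finset.range 2, (Nat.choose 2 (2*i) : ℤ) * 2 ^ (1 - i)) = 3
    decide
end

section
/- Let b(k) = \sum_{i=0}^{\lceil k/2 \rceil} \binom{k}{2i-1} 2^{k-i} (with the convention \binom{k}{-1} = 0). Then b satisfies the recurrence b(k) = 4·b(k-1) − 2·b(k-2) for all k ≥ 2, with b(0) = 0 and b(1) = 1. -/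
/-!
Binomially expanding `(2 + √2)^k`, the coefficient of `√2` is exactly `b k`, so `b k` is the
`√2`-part of `(2 + √2)^k` in `ℤ[√2]`. Since `2 + √2` is a root of `X^2 - 4X + 2`, its powers,
and hence their `√2`-parts, satisfy the recurrence.
-/

/-- b(k) = ∑_{i=0}^{⌈k/2⌉} C(k, 2i-1) · 2^{k-i}, with the convention C(k,-1) = 0
(realised by the `if i = 0` clause). -/
noncomputable def b (k : ℕ) : ℤ :=
  ∑ i ∈ Finset.range ((k + 1) / 2 + 1),
    if i = 0 then 0 else (Nat.choose k (2 * i - 1) : ℤ) * 2 ^ (k - i)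

open Finset Zsqrtd

theorem Finset.sum_range_filter_odd {M : Type*} [AddCommMonoid M] (f : ℕ → M) (n : ℕ) :
    ∑ j ∈ range n with Odd j, f j = ∑ i ∈ range (n / 2), f (2 * i + 1) := by
  refine sum_nbij' (· / 2) (2 * · + 1) ?_ ?_ ?_ ?_ fun j hj => congrArg f ?_ <;>
    simp +contextual [Nat.odd_iff] at * <;> omega

namespace Zsqrtd

variable {d : ℤ}

theorem im_sum {ι : Type*} (s : Finset ι) (f : ι → ℤ√d) :
    (∑ i ∈ s, f i).im = ∑ i ∈ s, (f i).im :=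
  map_sum (AddMonoidHom.mk' im im_add) f s

theorem sqrtd_pow_two_mul (i : ℕ) : (sqrtd : ℤ√d) ^ (2 * i) = ((d ^ i : ℤ) : ℤ√d) := by
  rw [pow_mul, sq, dmuld, Int.cast_pow]

theorem im_sqrtd_pow (j : ℕ) :
    ((sqrtd : ℤ√d) ^ j).im = if Odd j then d ^ (j / 2) else 0 := by
  obtain ⟨i, rfl | rfl⟩ := Nat.even_or_odd' j
  · simp only [sqrtd_pow_two_mul, im_intCast, Nat.not_odd_iff_even.mpr (even_two_mul i),
      if_false]
  · rw [pow_succ, sqrtd_pow_two_mul, im_mul, re_intCast, im_intCast, im_sqrtd, re_sqrtd,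
      if_pos (odd_two_mul_add_one i), Nat.mul_add_div two_pos, Nat.div_eq_of_lt one_lt_two]
    ring

theorem im_sqrtd_add_intCast_pow (a : ℤ) (k : ℕ) :
    ((sqrtd + (a : ℤ√d)) ^ k).im =
      ∑ i ∈ range ((k + 1) / 2), (k.choose (2 * i + 1) : ℤ) * d ^ i * a ^ (k - (2 * i + 1)) := by
  have hterm (j : ℕ) : ((sqrtd : ℤ√d) ^ j * (a : ℤ√d) ^ (k - j) * (k.choose j : ℤ√d)).im =
      if Odd j then (k.choose j : ℤ) * d ^ (j / 2) * a ^ (k - j) else 0 := by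
    rw [mul_assoc, ← Int.cast_pow, ← Int.cast_natCast, ← Int.cast_mul, mul_comm, im_smul,
      im_sqrtd_pow]
    split_ifs <;> ring
  rw [add_pow, im_sum]
  simp only [hterm, ← sum_filter, sum_range_filter_odd, Nat.mul_add_div two_pos, Nat.div_eq_of_lt
    one_lt_two, add_zero]

end Zsqrtd

theorem b_eq_im_pow (k : ℕ) : b k = ((sqrtd + 2 : ℤ√2) ^ k).im := by
  rw [show (2 : ℤ√2) = ((2 : ℤ) : ℤ√2) by norm_num, im_sqrtd_add_intCast_pow, b, sum_range_succ']
  simp only [Nat.add_one_ne_zero, if_false, if_true, add_zero]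
  refine sum_congr rfl fun i hi => ?_
  have hik : 2 * i + 1 ≤ k := by rw [mem_range] at hi; omega
  rw [mul_assoc, ← pow_add]
  congr 2; omega

theorem sq_sqrtd_add_two : (sqrtd + 2 : ℤ√2) ^ 2 = 4 * (sqrtd + 2) - 2 := by
  linear_combination (dmuld : (sqrtd : ℤ√2) * sqrtd = 2)

theorem b_recurrence :
    (∀ k : ℕ, 2 ≤ k → b k = 4 * b (k - 1) - 2 * b (k - 2)) ∧ b 0 = 0 ∧ b 1 = 1 := by
  refine ⟨fun k hk => ?_, by simp [b_eq_im_pow], by simp [b_eq_im_pow]⟩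
  obtain ⟨n, rfl⟩ := Nat.exists_eq_add_of_le' hk
  have hpow : (sqrtd + 2 : ℤ√2) ^ (n + 2) = 4 * (sqrtd + 2) ^ (n + 1) - 2 * (sqrtd + 2) ^ n := by
    rw [pow_add, sq_sqrtd_add_two]; ring
  show b (n + 2) = 4 * b (n + 1) - 2 * b n
  rw [b_eq_im_pow, b_eq_im_pow, b_eq_im_pow, hpow, im_sub, im_mul, im_mul]
  simp
end

section
/- For every k ≥ 1, \sum_{i=0}^{\lceil k/2 \rceil} \binom{k+1}{2i} 2^{k-i} = ((2+\sqrt{2})^{k+1} + (2-\sqrt{2})^{k+1})/4. -/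
lemma sum_even_aux (g : ℕ → ℝ) (h : ∀ j, Odd j → g j = 0) :
    ∀ n, ∑ j ∈ Finset.range (n + 1), g j = ∑ i ∈ Finset.range (n / 2 + 1), g (2 * i) := by
  intro n
  induction n with
  | zero => simp
  | succ n ih =>
    rw [Finset.sum_range_succ, ih]
    rcases Nat.even_or_odd (n + 1) with he | ho
    · obtain ⟨m, hm⟩ := he
      rw [show (n + 1) / 2 + 1 = n / 2 + 1 + 1 by omega, Finset.sum_range_succ (fun i => g (2 * i)) (n / 2 + 1),
        show 2 * (n / 2 + 1) = n + 1 by omega]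
    · obtain ⟨m, hm⟩ := ho
      rw [show (n + 1) / 2 = n / 2 by omega, h _ ⟨m, hm⟩, add_zero]

theorem o_closed_form (k : ℕ) (hk : 1 ≤ k) :
    (∑ i ∈ Finset.range ((k + 1) / 2 + 1),
        (Nat.choose (k + 1) (2 * i) : ℝ) * 2 ^ (k - i)) =
      ((2 + Real.sqrt 2) ^ (k + 1) + (2 - Real.sqrt 2) ^ (k + 1)) / 4 := by
  have h2 : Real.sqrt 2 * Real.sqrt 2 = 2 := Real.mul_self_sqrt (by norm_num)
  have key : (2 + Real.sqrt 2) ^ (k + 1) + (2 - Real.sqrt 2) ^ (k + 1)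
      = ∑ j ∈ Finset.range (k + 1 + 1),
          ((Real.sqrt 2) ^ j + (-Real.sqrt 2) ^ j) * 2 ^ (k + 1 - j)
            * (Nat.choose (k + 1) j : ℝ) := by
    rw [show (2 + Real.sqrt 2) = (Real.sqrt 2 + 2) by ring,
        show (2 - Real.sqrt 2) = (-Real.sqrt 2 + 2) by ring,
        add_pow, add_pow, ← Finset.sum_add_distrib]
    exact Finset.sum_congr rfl fun j hj => by ring
  have hodd : ∀ j, Odd j →
      ((Real.sqrt 2) ^ j + (-Real.sqrt 2) ^ j) * 2 ^ (k + 1 - j)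
        * (Nat.choose (k + 1) j : ℝ) = 0 := by
    intro j hj
    rw [hj.neg_pow]
    ring
  rw [key, sum_even_aux _ hodd (k + 1), eq_div_iff (by norm_num : (4:ℝ) ≠ 0),
      Finset.sum_mul]
  refine Finset.sum_congr rfl fun i hi => ?_
  simp only [Finset.mem_range] at hi
  have hi' : 2 * i ≤ k + 1 := by omega
  have e1 : Real.sqrt 2 ^ (2 * i) = 2 ^ i := by rw [pow_mul, sq, h2]
  have e2 : (-Real.sqrt 2) ^ (2 * i) = 2 ^ i := by rw [pow_mul, neg_sq, sq, h2]
  have e3 : (2:ℝ) ^ (k + 1 - 2 * i) * 2 ^ i = 2 ^ (k - i) * 2 := by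
    rw [← pow_add, ← pow_succ]
    congr 1
    omega
  rw [e1, e2]
  linear_combination -2 * (Nat.choose (k + 1) (2 * i) : ℝ) * e3
end

section
/- Let o(k) = \sum_i \binom{k+1}{2i} 2^{k-i} and b(k) = \sum_i \binom{k}{2i-1} 2^{k-i}. Then for all k ≥ 2, b(k) = 2·o(k-1) − 2·o(k-2). -/
private lemma o_ext (n N : ℕ) (hN : (n + 1) / 2 + 1 ≤ N) :
    ∑ i ∈ Finset.range N, (Nat.choose (n + 1) (2 * i) : ℤ) * 2 ^ (n - i) = o n := by
  rw [o]
  symm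
  apply Finset.sum_subset (Finset.range_subset_range.2 hN)
  intro i _ hi
  simp only [Finset.mem_range, not_lt] at hi
  have h : n + 1 < 2 * i := by omega
  rw [Nat.choose_eq_zero_of_lt h]
  simp

private lemma b_ext (n N : ℕ) (hN : (n + 1) / 2 + 1 ≤ N) :
    ∑ i ∈ Finset.range N,
      (if i = 0 then 0 else (Nat.choose n (2 * i - 1) : ℤ) * 2 ^ (n - i)) = b n := by
  rw [b]
  symm
  apply Finset.sum_subset (Finset.range_subset_range.2 hN)
  intro i _ hi
  simp only [Finset.mem_range, not_lt] at hi
  have hi0 : i ≠ 0 := by omega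
  have h : n < 2 * i - 1 := by omega
  rw [if_neg hi0, Nat.choose_eq_zero_of_lt h]
  simp

private lemma oB (m : ℕ) : o (m + 1) = 2 * o m + b (m + 1) := by
  rw [← o_ext (m + 1) (m + 3) (by omega), ← o_ext m (m + 3) (by omega),
    ← b_ext (m + 1) (m + 3) (by omega), Finset.mul_sum, ← Finset.sum_add_distrib]
  apply Finset.sum_congr rfl
  intro i _
  rcases i with _ | j
  · simp [pow_succ]
    ring
  · rw [if_neg (Nat.succ_ne_zero j)]
    have hA : 2 * (j + 1) = 2 * j + 2 := by ring
    have hA1 : 2 * j + 2 - 1 = 2 * j + 1 := by omega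
    rw [hA, hA1]
    rw [show (m + 2).choose (2 * j + 2) = (m + 1).choose (2 * j + 1) + (m + 1).choose (2 * j + 2)
      from Nat.choose_succ_succ (m + 1) (2 * j + 1)]
    rw [show m + 1 - (j + 1) = m - j by omega]
    push_cast
    by_cases hj : j + 1 ≤ m
    · rw [show m - j = (m - (j + 1)) + 1 by omega, pow_succ]
      ring
    · rw [show (m + 1).choose (2 * j + 2) = 0 from Nat.choose_eq_zero_of_lt (by omega)]
      push_cast
      ring

private lemma bA (m : ℕ) : b (m + 2) = 2 * b (m + 1) + 2 * o m := by
  rw [← b_ext (m + 2) (m + 4) (by omega), ← b_ext (m + 1) (m + 4) (by omega),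
    ← o_ext m (m + 3) (by omega)]
  have key : ∀ i ∈ Finset.range (m + 4),
      (if i = 0 then (0 : ℤ) else (Nat.choose (m + 2) (2 * i - 1) : ℤ) * 2 ^ (m + 2 - i)) =
      2 * (if i = 0 then 0 else (Nat.choose (m + 1) (2 * i - 1) : ℤ) * 2 ^ (m + 1 - i)) +
      (if i = 0 then 0
        else 2 * ((Nat.choose (m + 1) (2 * (i - 1)) : ℤ) * 2 ^ (m - (i - 1)))) := by
    intro i _
    rcases i with _ | j
    · norm_num
    · rw [if_neg (Nat.succ_ne_zero j), if_neg (Nat.succ_ne_zero j), if_neg (Nat.succ_ne_zero j)]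
      rw [show 2 * (j + 1) - 1 = 2 * j + 1 by omega, show (j + 1) - 1 = j by omega]
      rw [show (m + 2).choose (2 * j + 1) = (m + 1).choose (2 * j) + (m + 1).choose (2 * j + 1)
        from Nat.choose_succ_succ (m + 1) (2 * j)]
      rw [show m + 2 - (j + 1) = m + 1 - j by omega, show m + 1 - (j + 1) = m - j by omega]
      push_cast
      by_cases hj : j ≤ m
      · rw [show m + 1 - j = (m - j) + 1 by omega, pow_succ]
        ring
      · rw [show (m + 1).choose (2 * j) = 0 from Nat.choose_eq_zero_of_lt (by omega),
          show (m + 1).choose (2 * j + 1) = 0 from Nat.choose_eq_zero_of_lt (by omega)]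
        push_cast
        ring
  rw [Finset.sum_congr rfl key, Finset.sum_add_distrib, ← Finset.mul_sum]
  congr 1
  rw [Finset.sum_range_succ']
  simp only [Nat.succ_ne_zero, if_neg, Nat.add_sub_cancel, if_pos, reduceIte, add_zero]
  rw [← Finset.mul_sum]

theorem b_eq_two_o_sub (k : ℕ) (hk : 2 ≤ k) : b k = 2 * o (k - 1) - 2 * o (k - 2) := by
  obtain ⟨m, rfl⟩ : ∃ m, k = m + 2 := ⟨k - 2, by omega⟩
  have e1 : m + 2 - 1 = m + 1 := by omega
  have e2 : m + 2 - 2 = m := by omega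
  rw [e1, e2, bA m]
  have hb : b (m + 1) = o (m + 1) - 2 * o m := by rw [oB m]; ring
  rw [hb]
  ring
end

section
/- Fix an integer a, and consider the finite set S_a = { ((δ_1 + ε_1) − a·ε_2, δ_2 + ε_2) ∈ ℤ² : δ_1, δ_2, ε_1, ε_2 ∈ {0, 1} }. Then |S_a| = 9 if a = 0, |S_a| = 10 if |a| = 1, |S_a| = 11 if |a| = 2, and |S_a| = 12 if |a| ≥ 3. -/
set_option maxHeartbeats 1000000 in
theorem omni_count_stage_two (a : ℤ) :
    ((Finset.univ.image
        (fun p : (Fin 2 × Fin 2) × (Fin 2 × Fin 2) =>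
          ((((p.1.1 : ℤ) + (p.2.1 : ℤ)) - a * (p.2.2 : ℤ)),
            ((p.1.2 : ℤ) + (p.2.2 : ℤ))))).card =
      if a = 0 then 9 else if |a| = 1 then 10 else if |a| = 2 then 11 else 12) := by
  have hcase : a = 0 ∨ a = 1 ∨ a = -1 ∨ a = 2 ∨ a = -2 ∨ (3 ≤ a ∨ a ≤ -3) := by omega
  rcases hcase with h | h | h | h | h | h
  · subst h; decide
  · subst h; decide
  · subst h; decide
  · subst h; decide
  · subst h; decide
  · have h0 : ¬ a = 0 := by omega
    have h1 : ¬ |a| = 1 := by rw [abs_eq (by norm_num)]; omega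
    have h2 : ¬ |a| = 2 := by rw [abs_eq (by norm_num)]; omega
    rw [if_neg h0, if_neg h1, if_neg h2]
    clear h0 h1 h2
    have himg : (Finset.univ.image
        (fun p : (Fin 2 × Fin 2) × (Fin 2 × Fin 2) =>
          ((((p.1.1 : ℤ) + (p.2.1 : ℤ)) - a * (p.2.2 : ℤ)),
            ((p.1.2 : ℤ) + (p.2.2 : ℤ))))) =
        ({0,1,2} : Finset ℤ) ×ˢ ({0,1} : Finset ℤ) ∪
          ({(-a,1),(1-a,1),(2-a,1),(-a,2),(1-a,2),(2-a,2)} : Finset (ℤ × ℤ)) := by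
      ext ⟨x, y⟩
      simp only [Finset.mem_image, Finset.mem_union, Finset.mem_univ, true_and,
        Finset.mem_product, Finset.mem_insert, Finset.mem_singleton, Prod.exists,
        Fin.exists_fin_two, Prod.mk.injEq, Fin.isValue, Fin.val_zero, Fin.val_one,
        Int.cast_zero, Int.cast_one, Nat.cast_zero, Nat.cast_one]
      constructor
      · rintro ((((h'|h')|(h'|h'))|((h'|h')|(h'|h')))|(((h'|h')|(h'|h'))|((h'|h')|(h'|h')))) <;>
          omega
      · rintro (⟨hx, hy⟩ | h' | h' | h' | h' | h' | h')
        · rcases hx with hx | hx | hx <;> rcases hy with hy | hy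
          · exact Or.inl (Or.inl (Or.inl (Or.inl ⟨by omega, by omega⟩)))
          · exact Or.inl (Or.inr (Or.inl (Or.inl ⟨by omega, by omega⟩)))
          · exact Or.inl (Or.inl (Or.inr (Or.inl ⟨by omega, by omega⟩)))
          · exact Or.inl (Or.inr (Or.inr (Or.inl ⟨by omega, by omega⟩)))
          · exact Or.inr (Or.inl (Or.inr (Or.inl ⟨by omega, by omega⟩)))
          · exact Or.inr (Or.inr (Or.inr (Or.inl ⟨by omega, by omega⟩)))
        · exact Or.inl (Or.inl (Or.inl (Or.inr ⟨by omega, by omega⟩)))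
        · exact Or.inl (Or.inl (Or.inr (Or.inr ⟨by omega, by omega⟩)))
        · exact Or.inr (Or.inl (Or.inr (Or.inr ⟨by omega, by omega⟩)))
        · exact Or.inl (Or.inr (Or.inl (Or.inr ⟨by omega, by omega⟩)))
        · exact Or.inl (Or.inr (Or.inr (Or.inr ⟨by omega, by omega⟩)))
        · exact Or.inr (Or.inr (Or.inr (Or.inr ⟨by omega, by omega⟩)))
    rw [himg, Finset.card_union_of_disjoint]
    · rw [show (({0,1,2} : Finset ℤ) ×ˢ ({0,1} : Finset ℤ)).card = 6 by decide]
      rw [Finset.card_insert_of_notMem (by simp only [Finset.mem_insert, Finset.mem_singleton, Prod.mk.injEq]; omega),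
        Finset.card_insert_of_notMem (by simp only [Finset.mem_insert, Finset.mem_singleton, Prod.mk.injEq]; omega),
        Finset.card_insert_of_notMem (by simp only [Finset.mem_insert, Finset.mem_singleton, Prod.mk.injEq]; omega),
        Finset.card_insert_of_notMem (by simp only [Finset.mem_insert, Finset.mem_singleton, Prod.mk.injEq]; omega),
        Finset.card_insert_of_notMem (by simp only [Finset.mem_insert, Finset.mem_singleton, Prod.mk.injEq]; omega),
        Finset.card_singleton]
    · rw [Finset.disjoint_left]
      rintro ⟨x, y⟩ hxy hxy'
      simp only [Finset.mem_product, Finset.mem_insert, Finset.mem_singleton,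
        Prod.mk.injEq] at hxy hxy'
      omega
end

section
/- Let R be a commutative ring and x_1, ..., x_k ∈ R elements such that for every 1 ≤ j ≤ k, x_j² = c_j·x_j for some element c_j lying in the ideal generated by x_1, ..., x_{j-1} (in particular x_1² = 0). Then x_j^{j+1} = 0 for every 1 ≤ j ≤ k. -/
/-- Binomial-type bound: if `J * J ≤ I * J` then `(I ⊔ J)^(p+1) ≤ I^(p+1) ⊔ I^p * J`. -/
lemma sup_pow_le_aux {R : Type*} [CommRing R] (I J : Ideal R)
    (hJ : J * J ≤ I * J) : ∀ p : ℕ, (I ⊔ J) ^ (p + 1) ≤ I ^ (p + 1) ⊔ I ^ p * J := by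
  intro p
  induction p with
  | zero => simp [Ideal.one_eq_top, Ideal.top_mul]
  | succ p ih =>
      calc (I ⊔ J) ^ (p + 2) = (I ⊔ J) ^ (p + 1) * (I ⊔ J) := pow_succ _ _
        _ ≤ (I ^ (p + 1) ⊔ I ^ p * J) * (I ⊔ J) := Ideal.mul_mono_left ih
        _ = I ^ (p + 1) * I ⊔ I ^ (p + 1) * J ⊔ (I ^ p * J * I ⊔ I ^ p * J * J) := by
            rw [Ideal.sup_mul, Ideal.mul_sup, Ideal.mul_sup]
        _ ≤ I ^ (p + 2) ⊔ I ^ (p + 1) * J := by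
            apply sup_le
            · apply sup_le
              · rw [← pow_succ]; exact le_sup_left
              · exact le_sup_right
            · apply sup_le
              · rw [mul_right_comm, ← pow_succ]; exact le_sup_right
              · calc I ^ p * J * J = I ^ p * (J * J) := mul_assoc _ _ _
                  _ ≤ I ^ p * (I * J) := Ideal.mul_mono_right hJ
                  _ = I ^ (p + 1) * J := by rw [← mul_assoc, ← pow_succ]
                  _ ≤ _ := le_sup_right

lemma span_pow_bot {R : Type*} [CommRing R] {k : ℕ}
    (x c : Fin k → R)
    (hsq : ∀ j : Fin k, x j ^ 2 = c j * x j)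
    (hc : ∀ j : Fin k, c j ∈ Ideal.span (x '' {i : Fin k | i < j})) :
    ∀ n : ℕ, (Ideal.span (x '' {i : Fin k | (i : ℕ) < n})) ^ (n + 1) = ⊥ := by
  intro n
  induction n with
  | zero =>
      have : {i : Fin k | (i : ℕ) < 0} = ∅ := by ext i; simp
      simp [this]
  | succ n ih =>
      by_cases hn : n < k
      · set m : Fin k := ⟨n, hn⟩ with hm
        have hidx : {i : Fin k | (i : ℕ) < n + 1} = insert m {i : Fin k | (i : ℕ) < n} := by
          ext i
          simp only [Set.mem_setOf_eq, Set.mem_insert_iff, hm, Fin.ext_iff,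
            Nat.lt_succ_iff_lt_or_eq]
          tauto
        set I := Ideal.span (x '' {i : Fin k | (i : ℕ) < n}) with hI
        set J := Ideal.span {x m} with hJdef
        have hspan : Ideal.span (x '' {i : Fin k | (i : ℕ) < n + 1}) = I ⊔ J := by
          rw [hidx, Set.image_insert_eq, Ideal.span_insert, sup_comm]
        have hcm : c m ∈ I := by
          have := hc m
          have hseteq : {i : Fin k | i < m} = {i : Fin k | (i : ℕ) < n} := by
            ext i; simp [Fin.lt_def, hm]
          rwa [hseteq] at this
        have hJ : J * J ≤ I * J := by
          rw [hJdef, Ideal.span_singleton_mul_span_singleton, ← pow_two, hsq m]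
          rw [Ideal.span_le, Set.singleton_subset_iff]
          exact Ideal.mul_mem_mul hcm (Ideal.subset_span rfl)
        have hle : (I ⊔ J) ^ (n + 2) ≤ I ^ (n + 2) ⊔ I ^ (n + 1) * J :=
          sup_pow_le_aux I J hJ (n + 1)
        rw [hspan]
        have h2 : I ^ (n + 2) = ⊥ := by rw [pow_succ, ih, Ideal.bot_mul]
        rw [h2, ih, Ideal.bot_mul, sup_idem] at hle
        exact le_bot_iff.mp hle
      · have hset : {i : Fin k | (i : ℕ) < n + 1} = {i : Fin k | (i : ℕ) < n} := by
          ext i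
          simp only [Set.mem_setOf_eq]
          constructor
          · intro _; exact lt_of_lt_of_le i.isLt (Nat.le_of_not_lt hn)
          · exact Nat.lt_succ_of_lt
        rw [hset, pow_succ, ih, Ideal.bot_mul]

/-- If x_j² = c_j·x_j where c_j lies in the ideal generated by the earlier x_i,
then x_j^{j+1} = 0 (here `j` is the 1-based position `j.val + 1`, so the
exponent is `j.val + 2`). -/
theorem pow_succ_succ_eq_zero {R : Type*} [CommRing R] {k : ℕ}
    (x c : Fin k → R)
    (hsq : ∀ j : Fin k, x j ^ 2 = c j * x j)
    (hc : ∀ j : Fin k, c j ∈ Ideal.span (x '' {i : Fin k | i < j})) :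
    ∀ j : Fin k, x j ^ (j.val + 2) = 0 := by
  intro j
  -- x j ^ (n+1) = c j ^ n * x j
  have hpow : ∀ n : ℕ, x j ^ (n + 1) = c j ^ n * x j := by
    intro n
    induction n with
    | zero => simp
    | succ n ih =>
        calc x j ^ (n + 2) = x j ^ (n + 1) * x j := pow_succ _ _
          _ = c j ^ n * x j * x j := by rw [ih]
          _ = c j ^ n * (x j ^ 2) := by ring
          _ = c j ^ n * (c j * x j) := by rw [hsq j]
          _ = c j ^ (n + 1) * x j := by ring
  have hcj : c j ∈ Ideal.span (x '' {i : Fin k | (i : ℕ) < j.val}) := by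
    have hseteq : {i : Fin k | i < j} = {i : Fin k | (i : ℕ) < j.val} := by
      ext i; exact Fin.lt_def
    have := hc j
    rwa [hseteq] at this
  have hzero : c j ^ (j.val + 1) = 0 := by
    have := Ideal.pow_mem_pow hcj (j.val + 1)
    rw [span_pow_bot x c hsq hc j.val] at this
    rwa [Ideal.mem_bot] at this
  rw [hpow (j.val + 1), hzero, zero_mul]
end
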